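/- arXiv:0808.3056 — 4 statements merged into one kernel-verified Lean document; each statement's English description precedes it below -/
import Mathlib

section
/- The symmetrization identity: for an indeterminate q with q ≠ 0 and q² ≠ 1, and variables z₁, z₂, z₃, the sum over all permutations σ ∈ S₃ of σ.( (q⁻³z₁² − (q+q⁻¹)z₂² + q³z₃²) · ∏_{i<j} (z_i − q⁻²z_j)/(z_i − z_j) ) equals 0, where σ acts by permuting the indices of the variables z₁, z₂, z₃. -/
/-!
Each summand is `N(z ∘ σ) / V(z ∘ σ)`, where `V` is the Vandermonde determinant (after flipping
the sign of numerator and denominator of every factor) and `N` is a polynomial in `z`, `q` and `q⁻¹`.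
Since `V(z ∘ σ) = sign σ · V(z)`, the sum equals `(∑ σ, sign σ · N(z ∘ σ)) / V(z)`, and the
antisymmetrization of `N` vanishes identically once `q · q⁻¹ = 1`.
-/

open Equiv Finset Matrix

theorem Equiv.Perm.sum_fin_three {M : Type*} [AddCommMonoid M] (f : Perm (Fin 3) → M) :
    ∑ σ, f σ = f 1 + f (swap 0 1) + f (swap 0 2) + f (swap 1 2) + f (swap 0 1 * swap 1 2) +
      f (swap 1 2 * swap 0 1) := by
  rw [show (univ : Finset (Perm (Fin 3))) =
      {1, swap 0 1, swap 0 2, swap 1 2, swap 0 1 * swap 1 2, swap 1 2 * swap 0 1} by decide,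
    sum_insert (by decide), sum_insert (by decide), sum_insert (by decide),
    sum_insert (by decide), sum_pair (by decide)]
  simp only [add_assoc]

theorem Matrix.det_vandermonde_comp_perm {R : Type*} [CommRing R] {n : ℕ} (v : Fin n → R)
    (σ : Perm (Fin n)) : (vandermonde (v ∘ σ)).det = Perm.sign σ * (vandermonde v).det := by
  rw [← det_permute]
  rfl

theorem Matrix.det_vandermonde_fin_three {R : Type*} [CommRing R] (v : Fin 3 → R) :
    (vandermonde v).det = (v 1 - v 0) * (v 2 - v 0) * (v 2 - v 1) := by
  simp only [det_vandermonde, Fin.prod_univ_three, Fin.Ioi_zero_eq_map, prod_map,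
    Fin.coe_succEmb, Fin.prod_univ_two, Fin.succ_zero_eq_one, Fin.succ_one_eq_two,
    show Ioi (1 : Fin 3) = {2} by decide, show Ioi (2 : Fin 3) = ∅ by decide, prod_singleton,
    prod_empty, mul_one, mul_assoc]

theorem sum_perm_div_of_alternating {ι F : Type*} [Fintype ι] [DecidableEq ι] [Field F]
    (N D : (ι → F) → F) (hD : ∀ σ : Perm ι, ∀ x, D (x ∘ σ) = Perm.sign σ * D x) (x : ι → F) :
    ∑ σ : Perm ι, N (x ∘ σ) / D (x ∘ σ) = (∑ σ : Perm ι, Perm.sign σ * N (x ∘ σ)) / D x := by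
  rw [sum_div]
  refine sum_congr rfl fun σ _ => ?_
  rw [hD]
  rcases Int.units_eq_one_or (Perm.sign σ) with h | h <;> simp [h, neg_div, div_neg]

section

variable {F : Type*} [Field F]

def symmetrizationNumerator (q : F) (x : Fin 3 → F) : F :=
  (q⁻¹ ^ 3 * x 0 ^ 2 - (q + q⁻¹) * x 1 ^ 2 + q ^ 3 * x 2 ^ 2) *
    ((q⁻¹ ^ 2 * x 1 - x 0) * (q⁻¹ ^ 2 * x 2 - x 0) * (q⁻¹ ^ 2 * x 2 - x 1))

theorem summand_eq_symmetrizationNumerator_div (q : F) (x : Fin 3 → F) :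
    (q⁻¹ ^ 3 * x 0 ^ 2 - (q + q⁻¹) * x 1 ^ 2 + q ^ 3 * x 2 ^ 2) *
        ((x 0 - q⁻¹ ^ 2 * x 1) / (x 0 - x 1) * ((x 0 - q⁻¹ ^ 2 * x 2) / (x 0 - x 2)) *
          ((x 1 - q⁻¹ ^ 2 * x 2) / (x 1 - x 2))) =
      symmetrizationNumerator q x / (vandermonde x).det := by
  rw [det_vandermonde_fin_three, symmetrizationNumerator, ← neg_div_neg_eq,
    ← neg_div_neg_eq (x 0 - _), ← neg_div_neg_eq (x 1 - _), div_mul_div_comm, div_mul_div_comm,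
    mul_div_assoc']
  simp only [neg_sub]

theorem sum_sign_mul_symmetrizationNumerator {q : F} (hq : q ≠ 0) (x : Fin 3 → F) :
    ∑ σ : Perm (Fin 3), Perm.sign σ * symmetrizationNumerator q (x ∘ σ) = 0 := by
  rw [Perm.sum_fin_three]
  simp only [symmetrizationNumerator, Function.comp_apply, Perm.coe_one, id_eq, Perm.coe_mul,
    Perm.sign_one, Perm.sign_mul, Perm.sign_swap', Fin.reduceEq, ↓reduceIte, swap_apply_left,
    swap_apply_right, ne_eq, not_false_eq_true, swap_apply_of_ne_of_ne, Units.val_one,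
    Units.val_neg, Int.reduceNeg, Int.cast_one, Int.cast_neg, neg_mul, mul_neg, one_mul,
    mul_one, neg_neg]
  field_simp
  ring

end

theorem symmetrization_identity_general {F : Type*} [Field F]
    (q : F) (hq : q ≠ 0)
    (z : Fin 3 → F) :
    ∑ σ : Equiv.Perm (Fin 3),
      (q⁻¹ ^ 3 * (z (σ 0)) ^ 2 - (q + q⁻¹) * (z (σ 1)) ^ 2 + q ^ 3 * (z (σ 2)) ^ 2) *
        ((z (σ 0) - q⁻¹ ^ 2 * z (σ 1)) / (z (σ 0) - z (σ 1)) *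
         ((z (σ 0) - q⁻¹ ^ 2 * z (σ 2)) / (z (σ 0) - z (σ 2))) *
         ((z (σ 1) - q⁻¹ ^ 2 * z (σ 2)) / (z (σ 1) - z (σ 2)))) = 0 := by
  calc _ = ∑ σ : Perm (Fin 3),
          symmetrizationNumerator q (z ∘ σ) / (vandermonde (z ∘ σ)).det :=
        sum_congr rfl fun σ _ => summand_eq_symmetrizationNumerator_div q (z ∘ σ)
    _ = (∑ σ : Perm (Fin 3), Perm.sign σ * symmetrizationNumerator q (z ∘ σ)) /
          (vandermonde z).det :=
        sum_perm_div_of_alternating (symmetrizationNumerator q) (fun x => (vandermonde x).det)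
          (fun σ x => det_vandermonde_comp_perm x σ) z
    _ = 0 := by rw [sum_sign_mul_symmetrizationNumerator hq, zero_div]

/-- The symmetrization identity
`∑_{σ ∈ S₃} σ.((q⁻³z₁² − (q+q⁻¹)z₂² + q³z₃²) · ∏_{i<j} (z_i − q⁻²z_j)/(z_i − z_j)) = 0`
in a field of characteristic zero, where `σ` permutes the variables `z₁, z₂, z₃`. -/
theorem symmetrization_identity {F : Type*} [Field F] [CharZero F]
    (q : F) (hq : q ≠ 0) (hq2 : q ^ 2 ≠ 1)
    (z : Fin 3 → F) (hz : Function.Injective z) :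
    ∑ σ : Equiv.Perm (Fin 3),
      (q⁻¹ ^ 3 * (z (σ 0)) ^ 2 - (q + q⁻¹) * (z (σ 1)) ^ 2 + q ^ 3 * (z (σ 2)) ^ 2) *
        ((z (σ 0) - q⁻¹ ^ 2 * z (σ 1)) / (z (σ 0) - z (σ 1)) *
         ((z (σ 0) - q⁻¹ ^ 2 * z (σ 2)) / (z (σ 0) - z (σ 2))) *
         ((z (σ 1) - q⁻¹ ^ 2 * z (σ 2)) / (z (σ 1) - z (σ 2)))) = 0 :=
  symmetrization_identity_general q hq z
end

section
/- The Hall–Littlewood-type identity: for variables w, z₁, z₂, z₃ and parameter q, the symmetrization over S₃ (acting on z₁,z₂,z₃) of [ ∏ᵢ(w²+q⁻²zᵢ²) − [3]·(w²+q⁻²z₁²)(w²+q⁻²z₂²)(z₃²+q⁻²w²) + [3]·(w²+q⁻²z₁²)(z₂²+q⁻²w²)(z₃²+q⁻²w²) − ∏ᵢ(zᵢ²+q⁻²w²) ] · ∏_{i<j}(z_i−q⁻²z_j)/(z_i−z_j) equals 0, where [3] = q² + 1 + q⁻². -/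
/-!
Multiplying through by the Vandermonde product `Δ(z) = ∏_{i<j} (z_i - z_j)`, which changes by
`sign σ` under `z ↦ z ∘ σ`, turns the symmetrization into `Δ(z)⁻¹` times the antisymmetrization
of the bracket times `∏_{i<j} (z_i - p z_j)`, where `p = q⁻²`. With `[3]` replaced by an
indeterminate `c`, this antisymmetrization is an explicit polynomial carrying the factor
`1 + p + p² - p c`, and `q⁻² [3] = 1 + q⁻² + q⁻⁴`.
-/

open Finset Equiv Matrix

section

variable {R : Type*} [CommRing R]

def deformedVandermonde {n : ℕ} (p : R) (x : Fin n → R) : R :=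
  ∏ i, ∏ j ∈ Ioi i, (x i - p * x j)

theorem deformedVandermonde_one_eq_mul_det {n : ℕ} (x : Fin n → R) :
    deformedVandermonde 1 x = (∏ i : Fin n, (-1) ^ #(Ioi i)) * (vandermonde x).det := by
  simp only [deformedVandermonde, det_vandermonde, one_mul, ← prod_mul_distrib]
  refine prod_congr rfl fun i _ => ?_
  rw [← prod_const, ← prod_mul_distrib]
  simp

theorem deformedVandermonde_one_comp_perm {n : ℕ} (x : Fin n → R) (σ : Perm (Fin n)) :
    deformedVandermonde 1 (x ∘ σ) = Perm.sign σ * deformedVandermonde 1 x := by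
  have hrows : vandermonde (x ∘ σ) = (vandermonde x).submatrix σ id := rfl
  rw [deformedVandermonde_one_eq_mul_det, deformedVandermonde_one_eq_mul_det, hrows,
    det_permute]
  ring

theorem deformedVandermonde_fin_three (p : R) (x : Fin 3 → R) :
    deformedVandermonde p x = (x 0 - p * x 1) * (x 0 - p * x 2) * (x 1 - p * x 2) := by
  have h0 : Ioi (0 : Fin 3) = {1, 2} := by decide
  have h1 : Ioi (1 : Fin 3) = {2} := by decide
  have h2 : Ioi (2 : Fin 3) = ∅ := by decide
  simp [deformedVandermonde, Fin.prod_univ_three, h0, h1, h2, mul_assoc]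

end

theorem Fin.sum_perm_three_sign_smul {α M : Type*} [AddCommGroup M] (G : (Fin 3 → α) → M)
    (x : Fin 3 → α) :
    ∑ σ : Perm (Fin 3), Perm.sign σ • G (x ∘ σ) =
      G ![x 0, x 1, x 2] - G ![x 1, x 0, x 2] - G ![x 2, x 1, x 0] - G ![x 0, x 2, x 1]
        + G ![x 1, x 2, x 0] + G ![x 2, x 0, x 1] := by
  have huniv : (univ : Finset (Perm (Fin 3))) =
      {1, swap 0 1, swap 0 2, swap 1 2, swap 0 1 * swap 1 2, swap 1 2 * swap 0 1} := by decide
  have hcomp (σ : Perm (Fin 3)) : x ∘ σ = ![x (σ 0), x (σ 1), x (σ 2)] := by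
    funext i; fin_cases i <;> rfl
  rw [huniv, sum_insert (by decide), sum_insert (by decide), sum_insert (by decide),
    sum_insert (by decide), sum_insert (by decide), sum_singleton]
  simp only [hcomp]
  simp only [Perm.sign_one, Perm.coe_one, Perm.sign_swap', Perm.sign_mul, Perm.coe_mul,
    Function.comp_apply, id_eq, swap_apply_left, swap_apply_right, swap_apply_of_ne_of_ne,
    ne_eq, Fin.reduceEq, not_false_eq_true, zero_ne_one, one_ne_zero, if_false, mul_neg, mul_one,
    neg_neg, one_smul, Units.neg_smul]
  abel

namespace HallLittlewood

/-- The bracketed factor of the identity, with `c` standing for `[3]` and `p` for `q⁻²`. -/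
def bracket {R : Type*} [CommRing R] (c p w : R) (x : Fin 3 → R) : R :=
  (w ^ 2 + p * x 0 ^ 2) * (w ^ 2 + p * x 1 ^ 2) * (w ^ 2 + p * x 2 ^ 2)
    - c * ((w ^ 2 + p * x 0 ^ 2) * (w ^ 2 + p * x 1 ^ 2) * (x 2 ^ 2 + p * w ^ 2))
    + c * ((w ^ 2 + p * x 0 ^ 2) * (x 1 ^ 2 + p * w ^ 2) * (x 2 ^ 2 + p * w ^ 2))
    - (x 0 ^ 2 + p * w ^ 2) * (x 1 ^ 2 + p * w ^ 2) * (x 2 ^ 2 + p * w ^ 2)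

theorem sum_sign_smul_bracket_mul {R : Type*} [CommRing R] (c p w : R) (x : Fin 3 → R) :
    ∑ σ : Perm (Fin 3),
      Perm.sign σ • (bracket c p w (x ∘ σ) * deformedVandermonde p (x ∘ σ)) =
      (1 + p + p ^ 2 - p * c) * (1 - p ^ 2) *
        ((1 + p) ^ 2 * (w ^ 6 - x 0 ^ 2 * x 1 ^ 2 * x 2 ^ 2)
          - p * ((w ^ 2 - x 0 ^ 2) * (w ^ 2 - x 1 ^ 2) * (w ^ 2 - x 2 ^ 2))) *
        deformedVandermonde 1 x := by
  rw [Fin.sum_perm_three_sign_smul (fun y => bracket c p w y * deformedVandermonde p y)]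
  simp only [bracket, deformedVandermonde_fin_three, Matrix.cons_val_zero, Matrix.cons_val_one,
    Matrix.cons_val_two, Matrix.tail_cons, Matrix.head_cons]
  ring

theorem mul_prod_ratio_eq {F : Type*} [Field F] (p B : F) (x : Fin 3 → F) (σ : Perm (Fin 3)) :
    B * ((x (σ 0) - p * x (σ 1)) / (x (σ 0) - x (σ 1)) *
        ((x (σ 0) - p * x (σ 2)) / (x (σ 0) - x (σ 2))) *
        ((x (σ 1) - p * x (σ 2)) / (x (σ 1) - x (σ 2)))) =
      Perm.sign σ • (B * deformedVandermonde p (x ∘ σ)) / deformedVandermonde 1 x := by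
  have hratio : (x (σ 0) - p * x (σ 1)) / (x (σ 0) - x (σ 1)) *
        ((x (σ 0) - p * x (σ 2)) / (x (σ 0) - x (σ 2))) *
        ((x (σ 1) - p * x (σ 2)) / (x (σ 1) - x (σ 2))) =
      deformedVandermonde p (x ∘ σ) / deformedVandermonde 1 (x ∘ σ) := by
    simp only [deformedVandermonde_fin_three, one_mul, div_mul_div_comm, Function.comp_apply]
  rw [hratio, deformedVandermonde_one_comp_perm]
  rcases Int.units_eq_one_or (Perm.sign σ) with h | h <;>
    simp [h, div_neg, neg_div, mul_div_assoc]

end HallLittlewood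

theorem hall_littlewood_type_identity_general {F : Type*} [Field F]
    (q : F) (hq : q ≠ 0) (w : F)
    (z : Fin 3 → F) :
    ∑ σ : Equiv.Perm (Fin 3),
      (((w ^ 2 + q⁻¹ ^ 2 * (z (σ 0)) ^ 2) * (w ^ 2 + q⁻¹ ^ 2 * (z (σ 1)) ^ 2) *
          (w ^ 2 + q⁻¹ ^ 2 * (z (σ 2)) ^ 2)
        - (q ^ 2 + 1 + q⁻¹ ^ 2) *
          ((w ^ 2 + q⁻¹ ^ 2 * (z (σ 0)) ^ 2) * (w ^ 2 + q⁻¹ ^ 2 * (z (σ 1)) ^ 2) *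
           ((z (σ 2)) ^ 2 + q⁻¹ ^ 2 * w ^ 2))
        + (q ^ 2 + 1 + q⁻¹ ^ 2) *
          ((w ^ 2 + q⁻¹ ^ 2 * (z (σ 0)) ^ 2) * ((z (σ 1)) ^ 2 + q⁻¹ ^ 2 * w ^ 2) *
           ((z (σ 2)) ^ 2 + q⁻¹ ^ 2 * w ^ 2))
        - ((z (σ 0)) ^ 2 + q⁻¹ ^ 2 * w ^ 2) * ((z (σ 1)) ^ 2 + q⁻¹ ^ 2 * w ^ 2) *
          ((z (σ 2)) ^ 2 + q⁻¹ ^ 2 * w ^ 2)) *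
       ((z (σ 0) - q⁻¹ ^ 2 * z (σ 1)) / (z (σ 0) - z (σ 1)) *
        ((z (σ 0) - q⁻¹ ^ 2 * z (σ 2)) / (z (σ 0) - z (σ 2))) *
        ((z (σ 1) - q⁻¹ ^ 2 * z (σ 2)) / (z (σ 1) - z (σ 2))))) = 0 := by
  have hc : q⁻¹ ^ 2 * (q ^ 2 + 1 + q⁻¹ ^ 2) = 1 + q⁻¹ ^ 2 + (q⁻¹ ^ 2) ^ 2 := by
    field_simp
  simp_rw [HallLittlewood.mul_prod_ratio_eq, ← Finset.sum_div]
  refine div_eq_zero_iff.2 (.inl ?_)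
  refine (HallLittlewood.sum_sign_smul_bracket_mul (q ^ 2 + 1 + q⁻¹ ^ 2) (q⁻¹ ^ 2) w z).trans ?_
  simp only [hc, sub_self, zero_mul]

/-- Hall–Littlewood-type identity (Lemma 3.4 of the paper).
The symmetrization over `S₃` (acting on `z₁,z₂,z₃`) of the bracketed expression times
`∏_{i<j}(z_i−q⁻²z_j)/(z_i−z_j)` vanishes, where `[3] = q² + 1 + q⁻²`. -/
theorem hall_littlewood_type_identity {F : Type*} [Field F] [CharZero F]
    (q : F) (hq : q ≠ 0) (w : F)
    (z : Fin 3 → F) (hz : Function.Injective z) :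
    ∑ σ : Equiv.Perm (Fin 3),
      (((w ^ 2 + q⁻¹ ^ 2 * (z (σ 0)) ^ 2) * (w ^ 2 + q⁻¹ ^ 2 * (z (σ 1)) ^ 2) *
          (w ^ 2 + q⁻¹ ^ 2 * (z (σ 2)) ^ 2)
        - (q ^ 2 + 1 + q⁻¹ ^ 2) *
          ((w ^ 2 + q⁻¹ ^ 2 * (z (σ 0)) ^ 2) * (w ^ 2 + q⁻¹ ^ 2 * (z (σ 1)) ^ 2) *
           ((z (σ 2)) ^ 2 + q⁻¹ ^ 2 * w ^ 2))
        + (q ^ 2 + 1 + q⁻¹ ^ 2) *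
          ((w ^ 2 + q⁻¹ ^ 2 * (z (σ 0)) ^ 2) * ((z (σ 1)) ^ 2 + q⁻¹ ^ 2 * w ^ 2) *
           ((z (σ 2)) ^ 2 + q⁻¹ ^ 2 * w ^ 2))
        - ((z (σ 0)) ^ 2 + q⁻¹ ^ 2 * w ^ 2) * ((z (σ 1)) ^ 2 + q⁻¹ ^ 2 * w ^ 2) *
          ((z (σ 2)) ^ 2 + q⁻¹ ^ 2 * w ^ 2)) *
       ((z (σ 0) - q⁻¹ ^ 2 * z (σ 1)) / (z (σ 0) - z (σ 1)) *
        ((z (σ 0) - q⁻¹ ^ 2 * z (σ 2)) / (z (σ 0) - z (σ 2))) *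
        ((z (σ 1) - q⁻¹ ^ 2 * z (σ 2)) / (z (σ 1) - z (σ 2))))) = 0 :=
  hall_littlewood_type_identity_general q hq w z
end

section
/- With the operators h_{0m} ↦ (q^{|m|/2}ε₁(m) − q^{−|m|/2}ε₂(m))·[m]/m and h_{1m} ↦ (q^{|m|/2}ε₂(m) − (−1)^m q^{−|m|/2}ε₁(m))·d^{−m}·[m]/m acting on the Fock space (where C acts as 1), the commutator [h_{1m}, h_{0n}] equals −([m]/m)·[m]·(d^m + d^{−m})·δ_{m,−n}, where d² = −1 and [m] = (q^m−q^{−m})/(q−q^{−1}). -/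
/-!
Both operators are linear combinations of the two mutually commuting bosons `ε 0`, `ε 1`, so
their commutator is the coordinatewise pairing of the coefficient vectors times
`[ε i m, ε i (-m)] = m`. For `n = -m` the pairing is `-(1 + (-1) ^ m)`, and
`d ^ (-m) * (-1) ^ m = d ^ m` because `d ^ 2 = -1`.
-/

open Finset
attribute [local instance] LieRing.ofAssociativeRing

theorem lie_sum_smul_sum_smul {ι R L : Type*} [Fintype ι] [DecidableEq ι] [CommRing R]
    [LieRing L] [LieAlgebra R L] (x y : ι → L) (z : L)
    (hxy : ∀ i j, ⁅x i, y j⁆ = if i = j then z else 0) (a b : ι → R) :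
    ⁅∑ i, a i • x i, ∑ j, b j • y j⁆ = (∑ i, a i * b i) • z := by
  simp only [sum_lie, lie_sum, smul_lie, lie_smul, hxy, smul_ite, smul_zero,
    sum_ite_eq', mem_univ, if_true, smul_smul, sum_smul]
  exact sum_congr rfl fun i _ => by rw [mul_comm]

theorem zpow_neg_mul_neg_one_zpow {K : Type*} [DivisionRing K] {d : K} (hd : d ^ 2 = -1)
    (m : ℤ) : d ^ (-m) * (-1) ^ m = d ^ m := by
  have hd0 : d ≠ 0 := by
    rintro rfl
    simp at hd
  rw [← hd, ← zpow_natCast, ← zpow_mul, ← zpow_add₀ hd0]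
  congr 1
  push_cast
  ring

theorem fock_heisenberg_commutator_general
    {V : Type*} [AddCommGroup V] [Module ℂ V]
    (q s : ℂ) (hq : q ≠ 0) (hs : s ^ 2 = q)
    (ε : Fin 2 → ℤ → Module.End ℂ V)
    (hcomm : ∀ (i j : Fin 2) (m n : ℤ), m ≠ 0 → n ≠ 0 →
      ε i m * ε j n - ε j n * ε i m =
        if i = j ∧ m + n = 0 then (m : ℂ) • (1 : Module.End ℂ V) else 0) :
    let d : ℂ := -Complex.I
    let qint : ℤ → ℂ := fun m => (q ^ m - q ^ (-m)) / (q - q⁻¹)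
    let h0 : ℤ → Module.End ℂ V := fun n =>
      (qint n / (n : ℂ)) • (s ^ (|n| : ℤ) • ε 0 n - s ^ (-(|n| : ℤ)) • ε 1 n)
    let h1 : ℤ → Module.End ℂ V := fun m =>
      (d ^ (-m) * qint m / (m : ℂ)) •
        (s ^ (|m| : ℤ) • ε 1 m - ((-1 : ℂ) ^ m * s ^ (-(|m| : ℤ))) • ε 0 m)
    ∀ m n : ℤ, m ≠ 0 → n ≠ 0 →
      h1 m * h0 n - h0 n * h1 m =
        if m + n = 0 then
          (-(qint m / (m : ℂ)) * qint m * (d ^ m + d ^ (-m))) • (1 : Module.End ℂ V)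
        else 0 := by
  intro d qint h0 h1 m n hm hn
  have hs0 : s ≠ 0 := by
    rintro rfl
    exact hq (by simpa using hs.symm)
  have hh1 : h1 m = (d ^ (-m) * qint m / m) •
      ∑ i, ![-((-1 : ℂ) ^ m * s ^ (-|m|)), s ^ |m|] i • ε i m := by
    simp only [h1, Fin.sum_univ_two, Matrix.cons_val_zero, Matrix.cons_val_one]
    module
  have hh0 : h0 n = (qint n / n) • ∑ i, ![s ^ |n|, -s ^ (-|n|)] i • ε i n := by
    simp only [h0, Fin.sum_univ_two, Matrix.cons_val_zero, Matrix.cons_val_one]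
    module
  have hmodes : ∀ i j, ⁅ε i m, ε j n⁆ =
      if i = j then (if m + n = 0 then (m : ℂ) • (1 : Module.End ℂ V) else 0) else 0 :=
    fun i j => by rw [Ring.lie_def, hcomm i j m n hm hn, ite_and]
  rw [← Ring.lie_def, hh1, hh0, smul_lie, lie_smul, lie_sum_smul_sum_smul _ _ _ hmodes]
  split_ifs with h
  · obtain rfl : n = -m := by omega
    simp only [smul_smul, Fin.sum_univ_two, Matrix.cons_val_zero, Matrix.cons_val_one]
    congr 1
    have hqint : qint (-m) = -qint m := by
      simp only [qint, neg_neg]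
      ring
    have hs_inv : s ^ (-|m|) * s ^ |m| = 1 := zpow_neg_mul_zpow_self _ hs0
    have hd : d ^ (-m) * (-1) ^ m = d ^ m :=
      zpow_neg_mul_neg_one_zpow (by simp [d, sq]) m
    have hm' : (m : ℂ) ≠ 0 := Int.cast_ne_zero.mpr hm
    rw [abs_neg, hqint, Int.cast_neg]
    field_simp
    linear_combination (-qint m ^ 2 * s ^ |m| * s ^ (-|m|)) * hd
      + (-qint m ^ 2 * (d ^ m + d ^ (-m))) * hs_inv
  · simp only [smul_zero]

/-- With `h_{0m} = (q^{|m|/2}ε₁(m) − q^{−|m|/2}ε₂(m))·[m]/m` and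
`h_{1m} = (q^{|m|/2}ε₂(m) − (−1)^m q^{−|m|/2}ε₁(m))·d^{−m}·[m]/m` acting on the Fock
space with `C = 1`, one has `[h_{1m}, h_{0n}] = −([m]/m)·[m]·(d^m + d^{−m})·δ_{m,−n}`,
where `d = −i` and `[m] = (q^m − q^{−m})/(q − q⁻¹)`.  Here `s = q^{1/2}` is a fixed
square root of `q`, the Fock space is an arbitrary complex vector space `V`, and the
Heisenberg generators act as endomorphisms `ε i n` of `V`. -/
theorem fock_heisenberg_commutator
    {V : Type*} [AddCommGroup V] [Module ℂ V]
    (q s : ℂ) (hq : q ≠ 0) (hs : s ^ 2 = q)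
    (hroot : ∀ k : ℕ, k ≠ 0 → q ^ k ≠ 1)
    (ε : Fin 2 → ℤ → Module.End ℂ V)
    (hcomm : ∀ (i j : Fin 2) (m n : ℤ), m ≠ 0 → n ≠ 0 →
      ε i m * ε j n - ε j n * ε i m =
        if i = j ∧ m + n = 0 then (m : ℂ) • (1 : Module.End ℂ V) else 0) :
    let d : ℂ := -Complex.I
    let qint : ℤ → ℂ := fun m => (q ^ m - q ^ (-m)) / (q - q⁻¹)
    let h0 : ℤ → Module.End ℂ V := fun n =>
      (qint n / (n : ℂ)) • (s ^ (|n| : ℤ) • ε 0 n - s ^ (-(|n| : ℤ)) • ε 1 n)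
    let h1 : ℤ → Module.End ℂ V := fun m =>
      (d ^ (-m) * qint m / (m : ℂ)) •
        (s ^ (|m| : ℤ) • ε 1 m - ((-1 : ℂ) ^ m * s ^ (-(|m| : ℤ))) • ε 0 m)
    ∀ m n : ℤ, m ≠ 0 → n ≠ 0 →
      h1 m * h0 n - h0 n * h1 m =
        if m + n = 0 then
          (-(qint m / (m : ℂ)) * qint m * (d ^ m + d ^ (-m))) • (1 : Module.End ℂ V)
        else 0 :=
  fock_heisenberg_commutator_general q s hq hs ε hcomm
end

section
/- The TKK Lie algebra bracket is antisymmetric and satisfies the Jacobi identity: for a Jordan algebra J over F, the space K(J) = (sl₂(F) ⊗ J) ⊕ D_{J,J} with bracket [A⊗a, B⊗b] = [A,B]⊗(ab) + 2·tr(AB)·D_{a,b}, [D, A⊗a] = A⊗(Da), and the commutator bracket on D_{J,J}, is a Lie algebra. -/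
/-!
Write `D_{a,b} = [L_a, L_b]`. The linearized Jordan identity (Mathlib's
`two_nsmul_lie_lmul_lmul_add_add_eq_zero`) says `D_{a,bc} + D_{b,ca} + D_{c,ab} = 0`. Evaluating
two instances of it shows that every `D_{a,b}` is a derivation; hence
`[T, D_{a,b}] = D_{Ta,b} + D_{a,Tb}` for `T ∈ D_{J,J}`, and `D_{J,J}` is closed under commutators.

Both Lie axioms are multilinear and the elements `(A ⊗ a, S)` span `K(J)`, so it suffices to check
them on such elements, where bilinearity determines the bracket. Antisymmetry is
then immediate, and the Jacobi sum of three such elements vanishes by the `sl₂` identity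
`[A, [B, C]] = 2 tr(AB) C - 2 tr(CA) B` in the `sl₂ ⊗ J` component, and by the invariance of the
trace form together with the three identities above in the `D_{J,J}` component.
-/

open scoped TensorProduct

section InnerDerivation

variable (F : Type*) {J : Type*} [Field F] [NonUnitalNonAssocCommRing J] [Module F J]
    [SMulCommClass F J J]

def innerDer (a b : J) : Module.End F J :=
  LinearMap.mulLeft F a * LinearMap.mulLeft F b - LinearMap.mulLeft F b * LinearMap.mulLeft F a

variable {F}

@[simp]
theorem innerDer_apply (a b y : J) : innerDer F a b y = a * (b * y) - b * (a * y) := rfl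

theorem innerDer_swap (a b : J) : innerDer F b a = -innerDer F a b := by
  rw [innerDer, innerDer, neg_sub]

variable (F J) in
def innerDerSpan : Submodule F (Module.End F J) :=
  Submodule.span F {T | ∃ a b : J, T = innerDer F a b}

theorem innerDer_mem_innerDerSpan (a b : J) : innerDer F a b ∈ innerDerSpan F J :=
  Submodule.subset_span ⟨a, b, rfl⟩

theorem innerDer_cyclic [IsCommJordan J] [NeZero (2 : F)] (a b c : J) :
    innerDer F a (b * c) + innerDer F b (c * a) + innerDer F c (a * b) = 0 := by
  ext y
  simp only [LinearMap.add_apply, innerDer_apply, LinearMap.zero_apply]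
  have h : (2 : F) • (a * (b * c * y) - b * c * (a * y) + (b * (c * a * y) - c * a * (b * y))
      + (c * (a * b * y) - a * b * (c * y))) = 0 := by
    rw [ofNat_smul_eq_nsmul]
    exact DFunLike.congr_fun (two_nsmul_lie_lmul_lmul_add_add_eq_zero a b c) y
  exact (smul_eq_zero.mp h).resolve_left two_ne_zero

variable [IsScalarTower F J J]

variable (F J) in
def derivations : Submodule F (Module.End F J) where
  carrier := {T | ∀ c d : J, T (c * d) = T c * d + c * T d}
  add_mem' {S T} hS hT c d := by
    simp only [LinearMap.add_apply, hS c d, hT c d, add_mul, mul_add]; abel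
  zero_mem' _ _ := by simp
  smul_mem' r T hT c d := by
    simp only [LinearMap.smul_apply, hT c d, smul_add, smul_mul_assoc, mul_smul_comm]

theorem commutator_innerDer {T : Module.End F J} (hT : T ∈ derivations F J) (a b : J) :
    T * innerDer F a b - innerDer F a b * T = innerDer F (T a) b + innerDer F a (T b) := by
  ext y
  simp only [LinearMap.sub_apply, LinearMap.add_apply, Module.End.mul_apply, innerDer_apply,
    map_sub, hT _ _, mul_add]
  abel

variable [IsCommJordan J] [NeZero (2 : F)]

theorem innerDer_mem_derivations (a b : J) : innerDer F a b ∈ derivations F J := by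
  intro c d
  have h₁ := congrArg (fun T => T b) (innerDer_cyclic (F := F) a c d)
  have h₂ := congrArg (fun T => T a) (innerDer_cyclic (F := F) b c d)
  simp only [LinearMap.add_apply, innerDer_apply, LinearMap.zero_apply] at h₁ h₂ ⊢
  linear_combination (norm := (simp only [mul_sub, sub_mul]; simp only [mul_comm]; abel)) h₁ - h₂

theorem innerDerSpan_le_derivations : innerDerSpan F J ≤ derivations F J :=
  Submodule.span_le.mpr fun _ ⟨a, b, h⟩ => h ▸ innerDer_mem_derivations a b

theorem commutator_mem_innerDerSpan {S T : Module.End F J} (hS : S ∈ innerDerSpan F J)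
    (hT : T ∈ innerDerSpan F J) : S * T - T * S ∈ innerDerSpan F J := by
  induction hT using Submodule.span_induction with
  | mem T hT =>
    obtain ⟨a, b, rfl⟩ := hT
    rw [commutator_innerDer (innerDerSpan_le_derivations hS)]
    exact add_mem (innerDer_mem_innerDerSpan _ _) (innerDer_mem_innerDerSpan _ _)
  | zero => simp
  | add T T' _ _ hT hT' =>
    rw [mul_add, add_mul, add_sub_add_comm]
    exact add_mem hT hT'
  | smul r T _ hT =>
    rw [mul_smul_comm, smul_mul_assoc, ← smul_sub]
    exact Submodule.smul_mem _ r hT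

end InnerDerivation

section SL2

variable {R : Type*} [CommRing R]

theorem sl2_lie_lie (A B C : LieAlgebra.SpecialLinear.sl (Fin 2) R) :
    ⁅A, ⁅B, C⁆⁆ = (2 * (A.1 * B.1).trace) • C - (2 * (C.1 * A.1).trace) • B := by
  have traceless (X : LieAlgebra.SpecialLinear.sl (Fin 2) R) : X.1 1 1 = -X.1 0 0 := by
    linear_combination (Matrix.trace_fin_two _).symm.trans (LinearMap.mem_ker.mp X.2)
  ext i j
  fin_cases i <;> fin_cases j <;>
    simp [LieRing.of_associative_ring_bracket, Matrix.trace_fin_two, Matrix.mul_apply,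
      traceless A, traceless B, traceless C] <;> ring

theorem Matrix.trace_mul_commutator_cycle {n : Type*} [Fintype n] (X Y Z : Matrix n n R) :
    (Y * (Z * X - X * Z)).trace = (X * (Y * Z - Z * Y)).trace := by
  simp only [Matrix.mul_sub, Matrix.trace_sub, ← Matrix.mul_assoc]
  rw [Matrix.trace_mul_cycle Y Z X, Matrix.trace_mul_cycle Y X Z, Matrix.trace_mul_cycle Z Y X]

end SL2

theorem TensorProduct.prod_induction_on {R M N P : Type*} [CommSemiring R] [AddCommMonoid M]
    [AddCommMonoid N] [Module R M] [Module R N] [AddZeroClass P]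
    {motive : (M ⊗[R] N) × P → Prop} (add : ∀ x y, motive x → motive y → motive (x + y))
    (tmul : ∀ m n p, motive (m ⊗ₜ n, p)) (x : (M ⊗[R] N) × P) : motive x := by
  obtain ⟨t, p⟩ := x
  induction t using TensorProduct.induction_on generalizing p with
  | zero => simpa using tmul 0 0 p
  | tmul m n => exact tmul m n p
  | add t t' ht ht' => simpa using add _ _ (ht p) (ht' 0)

section TKK

variable {F J : Type*} [Field F] [NonUnitalNonAssocCommRing J] [Module F J]
    [SMulCommClass F J J] [IsScalarTower F J J] [IsCommJordan J] [NeZero (2 : F)]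

local notation "𝔰𝔩₂" => LieAlgebra.SpecialLinear.sl (Fin 2) F

local notation "K" => (𝔰𝔩₂ ⊗[F] J) × innerDerSpan F J

def tkkBracketTmul (A B : 𝔰𝔩₂) (a b : J) (S T : innerDerSpan F J) : K :=
  (⁅A, B⁆ ⊗ₜ (a * b) - A ⊗ₜ T.1 a + B ⊗ₜ S.1 b,
    (2 * (A.1 * B.1).trace) • ⟨innerDer F a b, innerDer_mem_innerDerSpan a b⟩
      + ⟨S * T - T * S, commutator_mem_innerDerSpan S.2 T.2⟩)

def IsTKKBracket (Br : K →ₗ[F] K →ₗ[F] K) : Prop :=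
  ∀ (A B : 𝔰𝔩₂) (a b : J) (S T : innerDerSpan F J),
    Br (A ⊗ₜ a, S) (B ⊗ₜ b, T) = tkkBracketTmul A B a b S T

theorem isTKKBracket_of_generators (Br : K →ₗ[F] K →ₗ[F] K)
    (hT : ∀ (A B : 𝔰𝔩₂) (a b : J) (hab : innerDer F a b ∈ innerDerSpan F J),
      Br (A ⊗ₜ a, 0) (B ⊗ₜ b, 0) = (⁅A, B⁆ ⊗ₜ (a * b), (2 * (A.1 * B.1).trace) • ⟨_, hab⟩))
    (hDT : ∀ (T : innerDerSpan F J) (A : 𝔰𝔩₂) (a : J), Br (0, T) (A ⊗ₜ a, 0) = (A ⊗ₜ T.1 a, 0))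
    (hTD : ∀ (T : innerDerSpan F J) (A : 𝔰𝔩₂) (a : J),
      Br (A ⊗ₜ a, 0) (0, T) = (-(A ⊗ₜ T.1 a), 0))
    (hDD : ∀ T₁ T₂ : innerDerSpan F J,
      (Br (0, T₁) (0, T₂)).1 = 0 ∧ (Br (0, T₁) (0, T₂)).2.1 = T₁.1 * T₂.1 - T₂.1 * T₁.1) :
    IsTKKBracket Br := by
  intro A B a b S T
  have split (p : 𝔰𝔩₂ ⊗[F] J) (V : innerDerSpan F J) : ((p, V) : K) = (p, 0) + (0, V) := by
    simp
  rw [split (A ⊗ₜ a) S, split (B ⊗ₜ b) T]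
  simp only [map_add, LinearMap.add_apply]
  rw [hT A B a b (innerDer_mem_innerDerSpan a b), hTD, hDT, Prod.ext_iff]
  refine ⟨?_, Subtype.ext ?_⟩
  · simp [(hDD S T).1, tkkBracketTmul]
    abel
  · simp [(hDD S T).2, tkkBracketTmul]

theorem tkkBracketTmul_add_swap (A B : 𝔰𝔩₂) (a b : J) (S T : innerDerSpan F J) :
    tkkBracketTmul A B a b S T + tkkBracketTmul B A b a T S = 0 := by
  refine Prod.ext ?_ (Subtype.ext ?_)
  · simp only [tkkBracketTmul, Prod.fst_add, Prod.fst_zero, ← lie_skew A B, mul_comm b a,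
      TensorProduct.neg_tmul]
    abel
  · simp only [tkkBracketTmul, Prod.snd_add, Prod.snd_zero, Submodule.coe_add,
      Submodule.coe_smul, Submodule.coe_zero, innerDer_swap b a, Matrix.trace_mul_comm B.1,
      smul_neg]
    abel

theorem tkk_bracket_add_swap {Br : K →ₗ[F] K →ₗ[F] K} (hBr : IsTKKBracket Br) (x y : K) :
    Br x y + Br y x = 0 := by
  induction x using TensorProduct.prod_induction_on generalizing y with
  | add x x' hx hx' =>
    simp only [map_add, LinearMap.add_apply]
    rw [add_add_add_comm, hx, hx', add_zero]
  | tmul A a S =>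
    induction y using TensorProduct.prod_induction_on with
    | add y y' hy hy' =>
      simp only [map_add, LinearMap.add_apply]
      rw [add_add_add_comm, hy, hy', add_zero]
    | tmul B b T => rw [hBr, hBr, tkkBracketTmul_add_swap]

theorem tkk_bracket_swap {Br : K →ₗ[F] K →ₗ[F] K} (hBr : IsTKKBracket Br) (x y : K) :
    Br x y = -Br y x :=
  eq_neg_of_add_eq_zero_left (tkk_bracket_add_swap hBr x y)

theorem tkk_bracket_self {Br : K →ₗ[F] K →ₗ[F] K} (hBr : IsTKKBracket Br) (x : K) :
    Br x x = 0 := by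
  have h : (2 : F) • Br x x = 0 := by rw [two_smul, tkk_bracket_add_swap hBr]
  exact (smul_eq_zero.mp h).resolve_left two_ne_zero

theorem tkk_bracket_tmul_sub_add {Br : K →ₗ[F] K →ₗ[F] K} (hBr : IsTKKBracket Br)
    (A B C E : 𝔰𝔩₂) (a b c e : J) (S V : innerDerSpan F J) :
    Br (A ⊗ₜ a, S) (B ⊗ₜ b - C ⊗ₜ c + E ⊗ₜ e, V) =
      tkkBracketTmul A B a b S 0 - tkkBracketTmul A C a c S 0 + tkkBracketTmul A E a e S 0
        + tkkBracketTmul A 0 a 0 S V := by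
  have split : ((B ⊗ₜ b - C ⊗ₜ c + E ⊗ₜ e, V) : K) =
      (B ⊗ₜ b, 0) - (C ⊗ₜ c, 0) + (E ⊗ₜ e, 0) + ((0 : 𝔰𝔩₂) ⊗ₜ (0 : J), V) := by
    ext <;> simp
  rw [split, map_add, map_add, map_sub, hBr, hBr, hBr, hBr]

theorem tkk_jacobi_tmul {Br : K →ₗ[F] K →ₗ[F] K} (hBr : IsTKKBracket Br)
    (A B C : 𝔰𝔩₂) (a b c : J) (S T U : innerDerSpan F J) :
    Br (A ⊗ₜ a, S) (Br (B ⊗ₜ b, T) (C ⊗ₜ c, U)) + Br (B ⊗ₜ b, T) (Br (C ⊗ₜ c, U) (A ⊗ₜ a, S))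
      + Br (C ⊗ₜ c, U) (Br (A ⊗ₜ a, S) (B ⊗ₜ b, T)) = 0 := by
  rw [hBr B C, hBr C A, hBr A B, tkkBracketTmul, tkkBracketTmul, tkkBracketTmul,
    tkk_bracket_tmul_sub_add hBr, tkk_bracket_tmul_sub_add hBr, tkk_bracket_tmul_sub_add hBr]
  have hS := innerDerSpan_le_derivations S.2
  have hT := innerDerSpan_le_derivations T.2
  have hU := innerDerSpan_le_derivations U.2
  refine Prod.ext ?_ (Subtype.ext ?_)
  · simp only [tkkBracketTmul, Prod.fst_add, Prod.fst_sub, Prod.fst_zero, ZeroMemClass.coe_zero,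
      LinearMap.zero_apply, lie_zero, mul_zero, map_zero, TensorProduct.tmul_zero,
      Submodule.coe_add, Submodule.coe_smul, LinearMap.add_apply, LinearMap.smul_apply,
      LinearMap.sub_apply, Module.End.mul_apply, innerDer_apply, hS _ _, hT _ _, hU _ _]
    rw [sl2_lie_lie A, sl2_lie_lie B, sl2_lie_lie C, ← lie_skew C A, ← lie_skew B A,
      ← lie_skew C B]
    simp only [TensorProduct.neg_tmul, TensorProduct.tmul_add, TensorProduct.tmul_sub,
      TensorProduct.sub_tmul, TensorProduct.tmul_smul, ← TensorProduct.smul_tmul', mul_comm]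
    module
  · simp only [tkkBracketTmul, Prod.snd_add, Prod.snd_sub, Prod.snd_zero, Submodule.coe_add,
      Submodule.coe_sub, Submodule.coe_smul, ZeroMemClass.coe_zero, mul_zero, zero_mul, sub_self,
      add_zero, Matrix.trace_zero, zero_smul, zero_add, LieSubalgebra.coe_bracket, Ring.lie_def]
    rw [Matrix.trace_mul_commutator_cycle A.1, Matrix.trace_mul_commutator_cycle B.1,
      Matrix.trace_mul_commutator_cycle A.1, Matrix.trace_mul_comm B.1 A.1,
      Matrix.trace_mul_comm C.1 B.1, Matrix.trace_mul_comm A.1 C.1]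
    linear_combination (norm := (simp only [mul_sub, sub_mul, mul_add, add_mul, smul_sub,
        smul_add, mul_smul_comm, smul_mul_assoc, mul_assoc]; module))
      (2 * (A.1 * (B.1 * C.1 - C.1 * B.1)).trace) • innerDer_cyclic (F := F) a b c
        + (2 * (B.1 * C.1).trace) • commutator_innerDer hS b c
        + (2 * (C.1 * A.1).trace) • commutator_innerDer hT c a
        + (2 * (A.1 * B.1).trace) • commutator_innerDer hU a b
        + (2 * (B.1 * C.1).trace) • innerDer_swap (F := F) (S.1 b) c
        + (2 * (C.1 * A.1).trace) • innerDer_swap (F := F) (T.1 c) a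
        + (2 * (A.1 * B.1).trace) • innerDer_swap (F := F) (U.1 a) b

theorem tkk_jacobi_cyclic {Br : K →ₗ[F] K →ₗ[F] K} (hBr : IsTKKBracket Br) (x y z : K) :
    Br x (Br y z) + Br y (Br z x) + Br z (Br x y) = 0 := by
  induction x using TensorProduct.prod_induction_on generalizing y z with
  | add x x' hx hx' =>
    simp only [map_add, LinearMap.add_apply]
    linear_combination (norm := abel) hx y z + hx' y z
  | tmul A a S =>
    induction y using TensorProduct.prod_induction_on generalizing z with
    | add y y' hy hy' =>
      simp only [map_add, LinearMap.add_apply]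
      linear_combination (norm := abel) hy z + hy' z
    | tmul B b T =>
      induction z using TensorProduct.prod_induction_on with
      | add z z' hz hz' =>
        simp only [map_add, LinearMap.add_apply]
        linear_combination (norm := abel) hz + hz'
      | tmul C c U => exact tkk_jacobi_tmul hBr A B C a b c S T U

theorem tkk_bracket_leibniz {Br : K →ₗ[F] K →ₗ[F] K} (hBr : IsTKKBracket Br) (x y z : K) :
    Br x (Br y z) = Br (Br x y) z + Br y (Br x z) := by
  have h := tkk_jacobi_cyclic hBr x y z
  rw [tkk_bracket_swap hBr z x, map_neg, tkk_bracket_swap hBr z (Br x y)] at h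
  linear_combination (norm := abel) h

end TKK

/-- For a Jordan algebra `J` over a field `F` of characteristic 0, the space
`K(J) = (sl₂(F) ⊗ J) ⊕ D_{J,J}` with bracket `[A⊗a, B⊗b] = [A,B]⊗(ab) + 2·tr(AB)·D_{a,b}`,
`[D, A⊗a] = A⊗(Da)` (and `[A⊗a, D] = −A⊗(Da)`), and the commutator bracket on `D_{J,J}`,
is a Lie algebra: the bracket is alternating (hence antisymmetric) and satisfies the
Jacobi identity.  Here the bracket is any `F`-bilinear map taking the prescribed values
on generators. -/
theorem tkk_is_lie_algebra {F : Type*} [Field F] [CharZero F]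
    {J : Type*} [NonUnitalNonAssocCommRing J] [Module F J]
    [SMulCommClass F J J] [IsScalarTower F J J]
    (hJordan : ∀ a b : J, (a * b) * (a * a) = a * (b * (a * a))) :
    ∀ (L : J → Module.End F J), L = (fun a => LinearMap.mulLeft F a) →
    ∀ (Din : J → J → Module.End F J), Din = (fun a b => L a * L b - L b * L a) →
    ∀ (DJJ : Submodule F (Module.End F J)),
      DJJ = Submodule.span F {T : Module.End F J | ∃ a b : J, T = Din a b} →
    ∀ (Br : ((LieAlgebra.SpecialLinear.sl (Fin 2) F ⊗[F] J) × DJJ) →ₗ[F]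
            ((LieAlgebra.SpecialLinear.sl (Fin 2) F ⊗[F] J) × DJJ) →ₗ[F]
            ((LieAlgebra.SpecialLinear.sl (Fin 2) F ⊗[F] J) × DJJ)),
      (∀ (A B : LieAlgebra.SpecialLinear.sl (Fin 2) F) (a b : J)
          (hab : (Din a b : Module.End F J) ∈ DJJ),
        Br (A ⊗ₜ a, 0) (B ⊗ₜ b, 0) =
          (⁅A, B⁆ ⊗ₜ (a * b),
           (2 * Matrix.trace ((A : Matrix (Fin 2) (Fin 2) F) * (B : Matrix (Fin 2) (Fin 2) F)))
             • (⟨Din a b, hab⟩ : DJJ))) →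
      (∀ (T : DJJ) (A : LieAlgebra.SpecialLinear.sl (Fin 2) F) (a : J),
        Br (0, T) (A ⊗ₜ a, 0) = (A ⊗ₜ ((T : Module.End F J) a), 0)) →
      (∀ (T : DJJ) (A : LieAlgebra.SpecialLinear.sl (Fin 2) F) (a : J),
        Br (A ⊗ₜ a, 0) (0, T) = (-(A ⊗ₜ ((T : Module.End F J) a)), 0)) →
      (∀ T₁ T₂ : DJJ,
        (Br (0, T₁) (0, T₂)).1 = 0 ∧
        ((Br (0, T₁) (0, T₂)).2 : Module.End F J) =
          (T₁ : Module.End F J) * T₂ - (T₂ : Module.End F J) * T₁) →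
      (∀ x, Br x x = 0) ∧
      (∀ x y, Br x y = -Br y x) ∧
      (∀ x y z, Br x (Br y z) = Br (Br x y) z + Br y (Br x z)) := by
  rintro L rfl Din rfl DJJ rfl Br hT hDT hTD hDD
  have : IsCommJordan J := ⟨hJordan⟩
  have hBr : IsTKKBracket Br := isTKKBracket_of_generators Br hT hDT hTD hDD
  exact ⟨tkk_bracket_self hBr, tkk_bracket_swap hBr, tkk_bracket_leibniz hBr⟩
end
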